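/- For Bernoulli distributions, if 0 < Δ < 1/40, then KL(Bernoulli(1/2) ‖ Bernoulli(1/2 + 4Δ)) ≤ 64Δ². -/

import Mathlib

/-- KL divergence between Bernoulli(p) and Bernoulli(q) for p, q ∈ (0,1). -/
noncomputable def klBernoulli (p q : ℝ) : ℝ :=
  p * Real.log (p / q) + (1 - p) * Real.log ((1 - p) / (1 - q))

/-! At `p = 1/2` the divergence collapses to `-log (4q(1-q)) / 2`, which for `q = 1/2 + 4Δ` is
`-log (1 - 64Δ²) / 2`; then `-log (1 - x) ≤ x / (1 - x) ≤ 2x` for `x ≤ 1/2`. -/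

open Real

theorem klBernoulli_half {q : ℝ} (hq : q ≠ 0) (hq' : 1 - q ≠ 0) :
    klBernoulli (1 / 2) q = -log (4 * q * (1 - q)) / 2 := by
  have hratio : 1 / 2 / q * (1 / 2 / (1 - q)) = (4 * q * (1 - q))⁻¹ := by
    field_simp
    ring
  rw [klBernoulli, show (1 : ℝ) - 1 / 2 = 1 / 2 by norm_num, ← mul_add,
    ← log_mul (by positivity) (by positivity), hratio, log_inv]
  ring

theorem neg_log_one_sub_le {x : ℝ} (hx : x < 1) : -log (1 - x) ≤ x / (1 - x) := by
  have hpos : 0 < 1 - x := by linarith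
  calc -log (1 - x) = log (1 - x)⁻¹ := (log_inv _).symm
    _ ≤ (1 - x)⁻¹ - 1 := log_le_sub_one_of_pos (inv_pos.mpr hpos)
    _ = x / (1 - x) := by
      field_simp
      ring

theorem kl_bernoulli_half_le (Δ : ℝ) (hΔ0 : 0 < Δ) (hΔ : Δ < 1 / 40) :
    klBernoulli (1 / 2) (1 / 2 + 4 * Δ) ≤ 64 * Δ ^ 2 := by
  have hsmall : 64 * Δ ^ 2 ≤ 1 / 2 := by nlinarith
  calc klBernoulli (1 / 2) (1 / 2 + 4 * Δ) = -log (1 - 64 * Δ ^ 2) / 2 := by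
        rw [klBernoulli_half (by linarith) (by linarith)]
        ring_nf
    _ ≤ 64 * Δ ^ 2 / (1 - 64 * Δ ^ 2) / 2 := by
        gcongr
        exact neg_log_one_sub_le (by linarith)
    _ ≤ 64 * Δ ^ 2 := by
        rw [div_div, div_le_iff₀ (by linarith)]
        nlinarith
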